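/- Let T_A and T_B be two d-simplices in ℝ^d sharing a common facet with vertices τ̃₁,…,τ̃_d, with apex vertices τ̃₀ ∈ T_A and τ̃_{d+1} ∈ T_B respectively. Let f be continuous on T_A ∪ T_B and affine on each of T_A and T_B with gradients a_A and a_B, taking values c̃_i at the vertices τ̃_i. Then a_A − a_B = [G_A 1 | G_B − G_A | −G_B 1] · (c̃₀, c̃₁, …, c̃_{d+1})ᵀ, where G_A is the inverse of the matrix with rows (τ̃₀ − τ̃_p)ᵀ, p=1,…,d, G_B is the inverse of the matrix with rows (τ̃_{d+1} − τ̃_p)ᵀ, p=1,…,d, and 1 ∈ ℝ^d is the all-ones vector. -/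

import Mathlib

open Matrix

theorem eq_inv_mulVec_of_dotProduct_edges_eq {ι R : Type*} [Fintype ι] [DecidableEq ι]
    [CommRing R] (x : ι → R) (y : ι → ι → R) (cx : R) (cy : ι → R) (a : ι → R)
    (hM : IsUnit (Matrix.of fun p q => (x - y p) q))
    (h : ∀ p, (x - y p) ⬝ᵥ a = cx - cy p) :
    a = (Matrix.of fun p q => (x - y p) q)⁻¹ *ᵥ (cx • 1 - cy) := by
  let := hM.invertible
  have hMa : (Matrix.of fun p q => (x - y p) q) *ᵥ a = cx • 1 - cy :=
    funext fun p => by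
      rw [Pi.sub_apply, Pi.smul_apply, Pi.one_apply, smul_eq_mul, mul_one]
      exact h p
  exact (inv_mulVec_eq_vec hMa.symm).symm

/-- The vertices are `τ 0` (apex of `T_A`), `τ 1, …, τ d` (the shared facet) and `τ (d+1)`
(apex of `T_B`); `f` takes values `c i` at the vertices `τ i` and is affine on each
simplex with gradients `aA` and `aB` respectively. -/
theorem gradient_difference_formula {d : ℕ}
    (τ : Fin (d + 2) → (Fin d → ℝ)) (c : Fin (d + 2) → ℝ)
    (aA aB : Fin d → ℝ)
    (GA GB : Matrix (Fin d) (Fin d) ℝ)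
    (hMA : IsUnit (Matrix.of fun p q : Fin d => (τ 0 - τ p.succ.castSucc) q))
    (hMB : IsUnit (Matrix.of fun p q : Fin d =>
      (τ (Fin.last (d + 1)) - τ p.succ.castSucc) q))
    (hGA : GA = (Matrix.of fun p q : Fin d => (τ 0 - τ p.succ.castSucc) q)⁻¹)
    (hGB : GB = (Matrix.of fun p q : Fin d =>
      (τ (Fin.last (d + 1)) - τ p.succ.castSucc) q)⁻¹)
    (hA : ∀ p : Fin d, (τ 0 - τ p.succ.castSucc) ⬝ᵥ aA = c 0 - c p.succ.castSucc)
    (hB : ∀ p : Fin d, (τ (Fin.last (d + 1)) - τ p.succ.castSucc) ⬝ᵥ aB =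
      c (Fin.last (d + 1)) - c p.succ.castSucc) :
    aA - aB = c 0 • GA.mulVec 1
        + (GB - GA).mulVec (fun p : Fin d => c p.succ.castSucc)
        - c (Fin.last (d + 1)) • GB.mulVec 1 := by
  rw [eq_inv_mulVec_of_dotProduct_edges_eq _ _ _ _ aA hMA hA,
    eq_inv_mulVec_of_dotProduct_edges_eq _ _ _ _ aB hMB hB, ← hGA, ← hGB]
  simp only [mulVec_sub, mulVec_smul, sub_mulVec]
  abel
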